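/- For any symmetric (0,2)-tensor A on an n-dimensional space (n ≥ 3), the tensor E(A) = g ∧ A² + ((n−2)/2) A ∧ A − tr(A) g ∧ A + (((tr A)² − tr(A²))/(2(n−1))) g ∧ g is a generalized curvature tensor whose Ricci contraction Ric(E(A)) is zero (and hence its scalar curvature κ(E(A)) = 0). -/

import Mathlib

open Module

variable {V : Type*} [AddCommGroup V] [Module ℝ V]

/-- Kulkarni–Nomizu product of two (0,2)-tensors. -/
def KN (A B : V → V → ℝ) : V → V → V → V → ℝ := fun X1 X2 X3 X4 =>
  A X1 X4 * B X2 X3 + A X2 X3 * B X1 X4 - A X1 X3 * B X2 X4 - A X2 X4 * B X1 X3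

/-- The endomorphism `X ∧_A Y` applied to `Z`. -/
def wedgeEnd (A : V → V → ℝ) (X Y Z : V) : V := A Y Z • X - A X Z • Y

/-- Tachibana tensor `Q(A,T)` of a symmetric (0,2)-tensor `A` and a (0,4)-tensor `T`. -/
def Tach (A : V → V → ℝ) (T : V → V → V → V → ℝ) : V → V → V → V → V → V → ℝ :=
  fun X1 X2 X3 X4 X Y =>
    -(T (wedgeEnd A X Y X1) X2 X3 X4) - T X1 (wedgeEnd A X Y X2) X3 X4
      - T X1 X2 (wedgeEnd A X Y X3) X4 - T X1 X2 X3 (wedgeEnd A X Y X4)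

/-- The tensor `E(A) = g ∧ A² + ((n−2)/2) A ∧ A − tr(A) g ∧ A
+ (((tr A)² − tr(A²))/(2(n−1))) g ∧ g` for `A X Y = g (a X) Y`. -/
noncomputable def EAt (g : LinearMap.BilinForm ℝ V) (a : V →ₗ[ℝ] V) : V → V → V → V → ℝ :=
  fun X1 X2 X3 X4 =>
    KN (fun x y => g x y) (fun x y => g (a (a x)) y) X1 X2 X3 X4
      + (((finrank ℝ V : ℝ) - 2) / 2)
          * KN (fun x y => g (a x) y) (fun x y => g (a x) y) X1 X2 X3 X4
      - LinearMap.trace ℝ V a * KN (fun x y => g x y) (fun x y => g (a x) y) X1 X2 X3 X4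
      + (((LinearMap.trace ℝ V a) ^ 2 - LinearMap.trace ℝ V (a ∘ₗ a))
            / (2 * ((finrank ℝ V : ℝ) - 1)))
          * KN (fun x y => g x y) (fun x y => g x y) X1 X2 X3 X4

/-!
`E(A)` is a linear combination of Kulkarni–Nomizu products of symmetric forms, and each such
product is an algebraic curvature tensor. For the Ricci contraction, write the forms as `g ∘ p`,
`g ∘ q` with `p, q` endomorphisms: raising the last index of `(g ∘ p) ∧ (g ∘ q)` gives an explicit
endomorphism with trace `(tr p) g ∘ q + (tr q) g ∘ p − g ∘ pq − g ∘ qp`. For the four products in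
`E(A)` these traces cancel, the coefficient of `g ∧ g` being chosen exactly for this; since `g`
is nondegenerate, `L X Y` is that endomorphism, so `Ric(E(A)) = 0`, and then `r = 0`.
-/

def algCurvatureTensors : Submodule ℝ (V → V → V → V → ℝ) where
  carrier := {T | (∀ X1 X2 X3 X4, T X1 X2 X3 X4 = - T X2 X1 X3 X4) ∧
    (∀ X1 X2 X3 X4, T X1 X2 X3 X4 = T X3 X4 X1 X2) ∧
    (∀ X1 X2 X3 X4, T X1 X2 X3 X4 + T X2 X3 X1 X4 + T X3 X1 X2 X4 = 0)}
  zero_mem' := by simp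
  add_mem' := by
    rintro T S ⟨hT₁, hT₂, hT₃⟩ ⟨hS₁, hS₂, hS₃⟩
    refine ⟨fun X1 X2 X3 X4 => ?_, fun X1 X2 X3 X4 => ?_, fun X1 X2 X3 X4 => ?_⟩
    · simp only [Pi.add_apply]; rw [hT₁, hS₁]; ring
    · simp only [Pi.add_apply]; rw [hT₂, hS₂]
    · simp only [Pi.add_apply]
      linear_combination hT₃ X1 X2 X3 X4 + hS₃ X1 X2 X3 X4
  smul_mem' := by
    rintro c T ⟨hT₁, hT₂, hT₃⟩
    refine ⟨fun X1 X2 X3 X4 => ?_, fun X1 X2 X3 X4 => ?_, fun X1 X2 X3 X4 => ?_⟩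
    · simp only [Pi.smul_apply, smul_eq_mul]; rw [hT₁]; ring
    · simp only [Pi.smul_apply, smul_eq_mul]; rw [hT₂]
    · simp only [Pi.smul_apply, smul_eq_mul]
      linear_combination c * hT₃ X1 X2 X3 X4

omit [AddCommGroup V] [Module ℝ V] in
lemma KN_mem_algCurvatureTensors {P Q : V → V → ℝ} (hP : ∀ x y, P x y = P y x)
    (hQ : ∀ x y, Q x y = Q y x) : KN P Q ∈ algCurvatureTensors := by
  refine ⟨fun X1 X2 X3 X4 => ?_, fun X1 X2 X3 X4 => ?_, fun X1 X2 X3 X4 => ?_⟩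
  · simp only [KN]; ring
  · simp only [KN]
    rw [hP X3 X2, hQ X3 X2, hP X4 X1, hQ X4 X1, hP X3 X1, hQ X3 X1, hP X4 X2, hQ X4 X2]
    ring
  · simp only [KN]
    rw [hP X3 X1, hQ X3 X1, hP X2 X1, hQ X2 X1, hP X3 X2, hQ X3 X2]
    ring

lemma EAt_mem_algCurvatureTensors {g : LinearMap.BilinForm ℝ V} (hgs : ∀ X Y, g X Y = g Y X)
    {a : V →ₗ[ℝ] V} (ha : ∀ X Y, g (a X) Y = g (a Y) X) : EAt g a ∈ algCurvatureTensors := by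
  have ha₂ : ∀ X Y, g (a (a X)) Y = g (a (a Y)) X := fun X Y => by
    rw [ha (a X), ha (a Y), hgs]
  refine add_mem (sub_mem (add_mem ?_ (Submodule.smul_mem _ _ ?_))
    (Submodule.smul_mem _ _ ?_)) (Submodule.smul_mem _ _ ?_) <;>
    apply KN_mem_algCurvatureTensors <;> assumption

lemma LinearMap.BilinForm.Nondegenerate.eq_of_forall_apply_eq {g : LinearMap.BilinForm ℝ V}
    (hg : g.Nondegenerate) {x y : V} (h : ∀ W, g x W = g y W) : x = y :=
  sub_eq_zero.mp <| hg.1 _ fun W => by rw [map_sub, LinearMap.sub_apply, h, sub_self]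

/-- The endomorphism `Z ↦ (g ∘ p) ∧ (g ∘ q) (Z, X, Y, ·)` with the last index raised by `g`. -/
noncomputable def raisedKN (g : LinearMap.BilinForm ℝ V) (p q : V →ₗ[ℝ] V) (X Y : V) :
    V →ₗ[ℝ] V :=
  g (q X) Y • p + g (p X) Y • q - (g.flip Y ∘ₗ p).smulRight (q X)
    - (g.flip Y ∘ₗ q).smulRight (p X)

lemma apply_raisedKN_apply (g : LinearMap.BilinForm ℝ V) (p q : V →ₗ[ℝ] V) (X Y Z W : V) :
    g (raisedKN g p q X Y Z) W
      = KN (fun x y => g (p x) y) (fun x y => g (q x) y) Z X Y W := by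
  simp only [raisedKN, KN, LinearMap.sub_apply, LinearMap.add_apply, LinearMap.smul_apply,
    LinearMap.smulRight_apply, LinearMap.comp_apply, LinearMap.BilinForm.flip_apply, map_sub,
    map_add, map_smul, smul_eq_mul]
  ring

lemma trace_raisedKN [FiniteDimensional ℝ V] (g : LinearMap.BilinForm ℝ V)
    (p q : V →ₗ[ℝ] V) (X Y : V) :
    LinearMap.trace ℝ V (raisedKN g p q X Y)
      = g (q X) Y * LinearMap.trace ℝ V p + g (p X) Y * LinearMap.trace ℝ V q
        - g (p (q X)) Y - g (q (p X)) Y := by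
  simp [raisedKN]

noncomputable def raisedEAt (g : LinearMap.BilinForm ℝ V) (a : V →ₗ[ℝ] V) (X Y : V) :
    V →ₗ[ℝ] V :=
  raisedKN g .id (a ∘ₗ a) X Y + (((finrank ℝ V : ℝ) - 2) / 2) • raisedKN g a a X Y
    - LinearMap.trace ℝ V a • raisedKN g .id a X Y
    + (((LinearMap.trace ℝ V a) ^ 2 - LinearMap.trace ℝ V (a ∘ₗ a))
        / (2 * ((finrank ℝ V : ℝ) - 1))) • raisedKN g .id .id X Y

lemma apply_raisedEAt_apply (g : LinearMap.BilinForm ℝ V) (a : V →ₗ[ℝ] V) (X Y Z W : V) :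
    g (raisedEAt g a X Y Z) W = EAt g a Z X Y W := by
  simp only [raisedEAt, LinearMap.add_apply, LinearMap.sub_apply, LinearMap.smul_apply,
    map_add, map_sub, map_smul, smul_eq_mul, apply_raisedKN_apply]
  rfl

lemma trace_raisedEAt [FiniteDimensional ℝ V] (hn : finrank ℝ V ≠ 1)
    (g : LinearMap.BilinForm ℝ V) (a : V →ₗ[ℝ] V) (X Y : V) :
    LinearMap.trace ℝ V (raisedEAt g a X Y) = 0 := by
  have hn' : (finrank ℝ V : ℝ) - 1 ≠ 0 := sub_ne_zero.mpr (mod_cast hn)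
  simp only [raisedEAt, map_add, map_sub, map_smul, smul_eq_mul, trace_raisedKN,
    LinearMap.trace_id, LinearMap.id_coe, id_eq, LinearMap.comp_apply]
  field_simp
  ring

/-- `E(A)` is a generalized curvature tensor with vanishing Ricci
contraction, hence vanishing scalar curvature.  Here `L X Y` is the linear map
`Z ↦ ℰ(Z,X)Y` obtained from `E(A)` by raising an index with `g`, so that
`Ric(E(A))(X,Y) = tr (L X Y)`, and `r` raises the Ricci tensor, so that
`κ(E(A)) = tr r`. -/
theorem statement_12 [FiniteDimensional ℝ V] (hn : 3 ≤ finrank ℝ V)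
    (g : LinearMap.BilinForm ℝ V) (hgs : ∀ X Y, g X Y = g Y X)
    (hgn : g.Nondegenerate)
    (a : V →ₗ[ℝ] V) (ha : ∀ X Y, g (a X) Y = g (a Y) X)
    (L : V → V → (V →ₗ[ℝ] V))
    (hL : ∀ X Y Z W, g (L X Y Z) W = EAt g a Z X Y W)
    (r : V →ₗ[ℝ] V)
    (hr : ∀ X Y, g (r X) Y = LinearMap.trace ℝ V (L X Y)) :
    (∀ X1 X2 X3 X4, EAt g a X1 X2 X3 X4 = - EAt g a X2 X1 X3 X4) ∧
    (∀ X1 X2 X3 X4, EAt g a X1 X2 X3 X4 = EAt g a X3 X4 X1 X2) ∧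
    (∀ X1 X2 X3 X4,
      EAt g a X1 X2 X3 X4 + EAt g a X2 X3 X1 X4 + EAt g a X3 X1 X2 X4 = 0) ∧
    (∀ X Y, LinearMap.trace ℝ V (L X Y) = 0) ∧
    LinearMap.trace ℝ V r = 0 := by
  have hL_eq : ∀ X Y, L X Y = raisedEAt g a X Y := fun X Y => LinearMap.ext fun Z =>
    hgn.eq_of_forall_apply_eq fun W => by rw [hL, apply_raisedEAt_apply]
  have hRic : ∀ X Y, LinearMap.trace ℝ V (L X Y) = 0 := fun X Y => by
    rw [hL_eq, trace_raisedEAt (by omega)]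
  have hr_eq : r = 0 := LinearMap.ext fun X =>
    hgn.eq_of_forall_apply_eq fun W => by rw [hr, hRic, LinearMap.zero_apply, map_zero,
      LinearMap.zero_apply]
  obtain ⟨hskew, hpair, hbianchi⟩ := EAt_mem_algCurvatureTensors hgs ha
  exact ⟨hskew, hpair, hbianchi, hRic, by rw [hr_eq, map_zero]⟩
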